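/- Let p > 5, let N ≥ 2 be an integer, let α < 0 and ω > α²/N², and define φ : [0,∞) → ℝ by φ(x) = (((p+1)ω/2)·sech²(((p−1)√ω/2)·x − arctanh(α/(N√ω))))^{1/(p−1)}. Let ξ₁ ∈ (0,1) be the unique solution of ((p−5)/2)·∫_ξ^1 (1−s²)^{2/(p−1)} ds = ξ·(1−ξ²)^{2/(p−1)} in (0,1). Then the inequality ∫₀^∞ φ'(x)² dx ≤ ((p−1)(p−3)/(4(p+1)))·∫₀^∞ φ(x)^{p+1} dx holds if and only if ω ≥ α²/(N²ξ₁²). -/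

import Mathlib

open MeasureTheory Real Set Filter Topology

noncomputable def arctanh (x : ℝ) : ℝ := Real.log ((1 + x) / (1 - x)) / 2

/-!
The substitution `s = tanh ((p - 1) √ω x / 2 - b)` maps `(0, ∞)` onto `(ξ₀, 1)`, where
`ξ₀ = tanh (-b) = -α / (N √ω)`, and turns both integrals into integrals of powers of `1 - s²`.
After an integration by parts, `(p-1)(p-3)/(4(p+1)) ∫ φ^{p+1} - ∫ φ'²` becomes a positive
multiple of `balance p ξ₀`. This function is positive at `0`, negative near `1`, and vanishes in
`(0, 1)` only at `ξ₁`; by the intermediate value theorem it is nonnegative on `(0, 1)` exactly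
up to `ξ₁`. Finally `ξ₀ ≤ ξ₁` is the condition `α² / (N² ξ₁²) ≤ ω`.
-/

lemma arctanh_eq_artanh {x : ℝ} (hx : x ∈ Icc (-1) 1) : arctanh x = artanh x := by
  rw [artanh_eq_half_log hx, arctanh]
  ring

lemma strictMono_tanh : StrictMono tanh := fun x y hxy => by
  have hmem (z : ℝ) : tanh z ∈ Ioo (-1) 1 := ⟨neg_one_lt_tanh z, tanh_lt_one z⟩
  rwa [← artanh_lt_artanh_iff (hmem x) (hmem y), artanh_tanh, artanh_tanh]

lemma one_sub_tanh_sq (x : ℝ) : 1 - tanh x ^ 2 = (1 / cosh x) ^ 2 := by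
  have := cosh_sq_sub_sinh_sq x
  rw [tanh_eq_sinh_div_cosh]
  field_simp
  linarith

lemma one_sub_tanh_sq_pos (x : ℝ) : 0 < 1 - tanh x ^ 2 :=
  sub_pos.2 (tanh_sq_lt_one x)

lemma hasDerivAt_tanh (x : ℝ) : HasDerivAt tanh (1 - tanh x ^ 2) x := by
  have h := (hasDerivAt_sinh x).div (hasDerivAt_cosh x) (cosh_pos x).ne'
  rw [show sinh / cosh = tanh from funext fun y => (tanh_eq_sinh_div_cosh y).symm] at h
  refine h.congr_deriv ?_
  rw [tanh_eq_sinh_div_cosh]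
  field_simp

lemma hasDerivAt_tanh_affine (a b x : ℝ) :
    HasDerivAt (fun x => tanh (a * x - b)) (a * (1 - tanh (a * x - b) ^ 2)) x := by
  have hlin : HasDerivAt (fun x => a * x - b) a x := by
    simpa using ((hasDerivAt_id x).const_mul a).sub_const b
  rw [mul_comm]
  exact (hasDerivAt_tanh (a * x - b)).comp x hlin

lemma strictMono_tanh_affine {a : ℝ} (ha : 0 < a) (b : ℝ) :
    StrictMono fun x => tanh (a * x - b) :=
  strictMono_tanh.comp fun x y hxy => show a * x - b < a * y - b by nlinarith

lemma image_tanh_affine_Ioi {a : ℝ} (ha : 0 < a) (b : ℝ) :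
    (fun x => tanh (a * x - b)) '' Ioi 0 = Ioo (tanh (-b)) 1 := by
  ext y
  constructor
  · rintro ⟨x, hx, rfl⟩
    exact ⟨strictMono_tanh (by nlinarith [mem_Ioi.1 hx]), tanh_lt_one _⟩
  · rintro ⟨hby, hy1⟩
    have hy : y ∈ Ioo (-1) 1 := ⟨(neg_one_lt_tanh _).trans hby, hy1⟩
    have hb : -b < artanh y := by
      rwa [← artanh_lt_artanh_iff ⟨neg_one_lt_tanh _, tanh_lt_one _⟩ hy, artanh_tanh] at hby
    refine ⟨(artanh y + b) / a, div_pos (by linarith) ha, ?_⟩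
    simp only [mul_div_cancel₀ _ ha.ne', add_sub_cancel_right, tanh_artanh hy]

lemma integral_comp_tanh_affine {a : ℝ} (ha : 0 < a) (b : ℝ) (g : ℝ → ℝ) :
    ∫ s in tanh (-b)..1, g s =
      ∫ x in Ioi 0, a * (1 - tanh (a * x - b) ^ 2) * g (tanh (a * x - b)) := by
  rw [intervalIntegral.integral_of_le (tanh_lt_one _).le, integral_Ioc_eq_integral_Ioo,
    ← image_tanh_affine_Ioi ha b,
    integral_image_eq_integral_abs_deriv_smul measurableSet_Ioi
      (fun x _ => (hasDerivAt_tanh_affine a b x).hasDerivWithinAt)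
      (strictMono_tanh_affine ha b).injective.injOn]
  refine setIntegral_congr_fun measurableSet_Ioi fun x _ => ?_
  have := one_sub_tanh_sq_pos (a * x - b)
  rw [abs_of_pos (by positivity), smul_eq_mul]

noncomputable def sechProfile (K a b r x : ℝ) : ℝ := (K * (1 / cosh (a * x - b)) ^ 2) ^ r

lemma sechProfile_eq (K a b r x : ℝ) :
    sechProfile K a b r x = (K * (1 - tanh (a * x - b) ^ 2)) ^ r := by
  rw [sechProfile, one_sub_tanh_sq]

lemma hasDerivAt_sechProfile {K : ℝ} (hK : 0 < K) (a b r x : ℝ) :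
    HasDerivAt (sechProfile K a b r)
      (-(2 * r * a) * tanh (a * x - b) * sechProfile K a b r x) x := by
  have hs := one_sub_tanh_sq_pos (a * x - b)
  have hX : 0 < K * (1 - tanh (a * x - b) ^ 2) := mul_pos hK hs
  have h := (((hasDerivAt_tanh_affine a b x).pow 2).const_sub 1).const_mul K |>.rpow_const
    (p := r) (Or.inl hX.ne')
  rw [show sechProfile K a b r = fun x => (K * (1 - tanh (a * x - b) ^ 2)) ^ r from
    funext (sechProfile_eq K a b r)]
  refine h.congr_deriv ?_
  simp only [Pi.pow_apply]
  rw [rpow_sub_one hX.ne']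
  push_cast
  field_simp

lemma integral_deriv_sechProfile_sq {K a : ℝ} (hK : 0 < K) (ha : 0 < a) (b r : ℝ) :
    ∫ x in Ioi 0, deriv (sechProfile K a b r) x ^ 2 =
      a * (2 * r) ^ 2 * K ^ (2 * r) * ∫ s in tanh (-b)..1, s ^ 2 * (1 - s ^ 2) ^ (2 * r - 1) := by
  rw [← intervalIntegral.integral_const_mul, integral_comp_tanh_affine ha]
  refine setIntegral_congr_fun measurableSet_Ioi fun x _ => ?_
  have hs := one_sub_tanh_sq_pos (a * x - b)
  rw [(hasDerivAt_sechProfile hK a b r x).deriv, mul_pow, ← rpow_two (sechProfile _ _ _ _ _),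
    sechProfile_eq, ← rpow_mul (by positivity), mul_rpow hK.le hs.le, rpow_sub_one hs.ne']
  field_simp

lemma integral_sechProfile_rpow {K a : ℝ} (hK : 0 < K) (ha : 0 < a) (b r q : ℝ) :
    ∫ x in Ioi 0, sechProfile K a b r x ^ q =
      K ^ (r * q) / a * ∫ s in tanh (-b)..1, (1 - s ^ 2) ^ (r * q - 1) := by
  rw [← intervalIntegral.integral_const_mul, integral_comp_tanh_affine ha]
  refine setIntegral_congr_fun measurableSet_Ioi fun x _ => ?_
  have hs := one_sub_tanh_sq_pos (a * x - b)
  rw [sechProfile_eq, ← rpow_mul (by positivity), mul_rpow hK.le hs.le, rpow_sub_one hs.ne']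
  field_simp

lemma continuous_one_sub_sq_rpow {β : ℝ} (hβ : 0 ≤ β) :
    Continuous fun s : ℝ => (1 - s ^ 2) ^ β :=
  (continuous_const.sub (continuous_pow 2)).rpow_const fun _ => Or.inr hβ

lemma integral_sq_mul_one_sub_sq_rpow {β t : ℝ} (hβ : 0 < β) (ht0 : 0 ≤ t) (ht1 : t ≤ 1) :
    2 * β * ∫ s in t..1, s ^ 2 * (1 - s ^ 2) ^ (β - 1) =
      (∫ s in t..1, (1 - s ^ 2) ^ β) + t * (1 - t ^ 2) ^ β := by
  set v : ℝ → ℝ := fun s => -(1 - s ^ 2) ^ β / (2 * β)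
  have hv : Continuous v := (continuous_one_sub_sq_rpow hβ.le).neg.div_const _
  have hvv' : ∀ s ∈ Ioo (min t 1) (max t 1), HasDerivAt v (s * (1 - s ^ 2) ^ (β - 1)) s := by
    intro s hs
    rw [min_eq_left ht1, max_eq_right ht1] at hs
    have hs2 : 1 - s ^ 2 ≠ 0 := by nlinarith [hs.1, hs.2]
    refine ((((hasDerivAt_pow 2 s).const_sub 1).rpow_const (p := β) (Or.inl hs2)).neg.div_const
      (2 * β)).congr_deriv ?_
    field_simp
    ring
  -- `v` is continuous and nondecreasing on `[t, 1]`, so its derivative is integrable there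
  -- although it blows up at `1` when `β < 1`
  have hv' : IntervalIntegrable (fun s => s * (1 - s ^ 2) ^ (β - 1)) volume t 1 := by
    refine intervalIntegral.intervalIntegrable_deriv_of_nonneg hv.continuousOn hvv' fun s hs => ?_
    rw [min_eq_left ht1, max_eq_right ht1] at hs
    have : 0 ≤ 1 - s ^ 2 := by nlinarith [hs.1, hs.2]
    exact mul_nonneg (ht0.trans hs.1.le) (rpow_nonneg this _)
  have ibp := intervalIntegral.integral_mul_deriv_eq_deriv_mul_of_hasDerivAt
    continuousOn_id hv.continuousOn (fun s _ => hasDerivAt_id s) hvv'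
    (intervalIntegrable_const (c := (1 : ℝ))) hv'
  simp only [id, one_mul, v, intervalIntegral.integral_div, intervalIntegral.integral_neg] at ibp
  rw [show (fun s : ℝ => s ^ 2 * (1 - s ^ 2) ^ (β - 1)) =
    fun s => s * (s * (1 - s ^ 2) ^ (β - 1)) from funext fun s => by ring, ibp]
  norm_num [zero_rpow hβ.ne']
  field_simp
  ring

lemma integral_one_sub_sq_rpow_pos {β t : ℝ} (hβ : 0 ≤ β) (ht : -1 < t) (ht1 : t < 1) :
    0 < ∫ s in t..1, (1 - s ^ 2) ^ β :=
  intervalIntegral.intervalIntegral_pos_of_pos_on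
    ((continuous_one_sub_sq_rpow hβ).intervalIntegrable _ _)
    (fun s hs => rpow_pos_of_pos (by nlinarith [hs.1, hs.2]) β) ht1

lemma integral_one_sub_sq_rpow_le {β t : ℝ} (hβ : 0 ≤ β) (ht0 : 0 ≤ t) (ht1 : t ≤ 1) :
    ∫ s in t..1, (1 - s ^ 2) ^ β ≤ (1 - t) * (1 - t ^ 2) ^ β := by
  have h := intervalIntegral.integral_mono_on (g := fun _ => (1 - t ^ 2) ^ β) ht1
    ((continuous_one_sub_sq_rpow hβ).intervalIntegrable _ _)
    (intervalIntegrable_const (μ := volume))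
    fun s hs => rpow_le_rpow (by nlinarith [hs.1, hs.2]) (by nlinarith [hs.1, hs.2]) hβ
  simpa using h

lemma nonneg_iff_le_of_unique_zero {g : ℝ → ℝ} {a b z t : ℝ} (hg : ContinuousOn g (Icc a b))
    (ha : 0 < g a) (hb : g b < 0) (hz : ∀ x ∈ Ioo a b, g x = 0 → x = z) (ht : t ∈ Ioo a b) :
    0 ≤ g t ↔ t ≤ z := by
  constructor
  · intro hgt
    by_contra! hzt
    obtain ⟨x, hx, hgx⟩ := intermediate_value_Icc' ht.2.le
      (hg.mono (Icc_subset_Icc ht.1.le le_rfl)) ⟨hb.le, hgt⟩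
    have hxb : x < b := hx.2.lt_of_ne (by rintro rfl; linarith)
    linarith [hz x ⟨ht.1.trans_le hx.1, hxb⟩ hgx, hx.1]
  · intro htz
    by_contra! hgt
    obtain ⟨x, hx, hgx⟩ := intermediate_value_Icc' ht.1.le
      (hg.mono (Icc_subset_Icc le_rfl ht.2.le)) ⟨hgt.le, ha.le⟩
    have hax : a < x := hx.1.lt_of_ne (by rintro rfl; linarith)
    have hxt : x < t := hx.2.lt_of_ne (by rintro rfl; linarith)
    linarith [hz x ⟨hax, hxt.trans ht.2⟩ hgx]

noncomputable def balance (p ξ : ℝ) : ℝ :=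
  (p - 5) / 2 * (∫ s in ξ..1, (1 - s ^ 2) ^ (2 / (p - 1))) - ξ * (1 - ξ ^ 2) ^ (2 / (p - 1))

lemma continuous_balance {p : ℝ} (hp : 1 < p) : Continuous (balance p) := by
  have hβ : 0 ≤ 2 / (p - 1) := div_nonneg zero_le_two (by linarith)
  refine (continuous_const.mul ?_).sub (continuous_id.mul (continuous_one_sub_sq_rpow hβ))
  exact continuous_iff_continuousAt.2 fun t =>
    (intervalIntegral.integral_hasDerivAt_left
      ((continuous_one_sub_sq_rpow hβ).intervalIntegrable _ _)
      ((continuous_one_sub_sq_rpow hβ).stronglyMeasurableAtFilter _ _)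
      (continuous_one_sub_sq_rpow hβ).continuousAt).continuousAt

lemma balance_zero_pos {p : ℝ} (hp : 5 < p) : 0 < balance p 0 := by
  have hB := integral_one_sub_sq_rpow_pos (β := 2 / (p - 1))
    (div_nonneg zero_le_two (by linarith)) neg_one_lt_zero zero_lt_one
  simp only [balance, zero_mul, sub_zero]
  exact mul_pos (by linarith) hB

lemma balance_neg {p t : ℝ} (hp : 5 < p) (ht : (p - 5) / (p - 3) < t) (ht1 : t < 1) :
    balance p t < 0 := by
  have hβ : 0 ≤ 2 / (p - 1) := div_nonneg zero_le_two (by linarith)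
  have ht0 : 0 ≤ t := (div_nonneg (by linarith) (by linarith)).trans ht.le
  have hcoef : (p - 5) / 2 * (1 - t) < t := by
    rw [div_lt_iff₀ (by linarith)] at ht
    linarith
  calc balance p t ≤ ((p - 5) / 2 * (1 - t) - t) * (1 - t ^ 2) ^ (2 / (p - 1)) := by
        have := integral_one_sub_sq_rpow_le hβ ht0 ht1.le
        rw [balance, sub_mul, mul_assoc]
        gcongr
    _ < 0 := mul_neg_of_neg_of_pos (by linarith) (rpow_pos_of_pos (by nlinarith) _)

lemma balance_nonneg_iff {p ξ₁ t : ℝ} (hp : 5 < p)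
    (huniq : ∀ ξ ∈ Ioo (0 : ℝ) 1,
      (p - 5) / 2 * (∫ s in ξ..1, (1 - s ^ 2) ^ (2 / (p - 1)))
        = ξ * (1 - ξ ^ 2) ^ (2 / (p - 1)) → ξ = ξ₁)
    (ht : t ∈ Ioo 0 1) : 0 ≤ balance p t ↔ t ≤ ξ₁ := by
  obtain ⟨c, hc, hc1⟩ := exists_between
    (max_lt ht.2 ((div_lt_one (by linarith)).2 (by linarith)) : max t ((p - 5) / (p - 3)) < 1)
  rw [max_lt_iff] at hc
  exact nonneg_iff_le_of_unique_zero (continuous_balance (by linarith)).continuousOn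
    (balance_zero_pos hp) (balance_neg hp hc.2 hc1)
    (fun x hx hx0 => huniq x ⟨hx.1, hx.2.trans hc1⟩ (sub_eq_zero.1 hx0)) ⟨ht.1, hc.1⟩

lemma integral_gap_sechProfile_eq_balance {p ω : ℝ} (hp : 1 < p) (hω : 0 < ω) {b : ℝ} (hb : 0 ≤ tanh (-b)) :
    (p - 1) * (p - 3) / (4 * (p + 1)) *
        (∫ x in Ioi 0, sechProfile ((p + 1) * ω / 2) ((p - 1) * √ω / 2) b (1 / (p - 1)) x ^ (p + 1))
      - ∫ x in Ioi 0, deriv (sechProfile ((p + 1) * ω / 2) ((p - 1) * √ω / 2) b (1 / (p - 1))) x ^ 2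
      = ((p + 1) * ω / 2) ^ (2 / (p - 1)) * √ω / 2 * balance p (tanh (-b)) := by
  have hK : 0 < (p + 1) * ω / 2 := by positivity
  have hp1 : 0 < p - 1 := by linarith
  have ha : 0 < (p - 1) * √ω / 2 := by positivity
  have hβ : 0 < 2 / (p - 1) := by positivity
  rw [integral_sechProfile_rpow hK ha, integral_deriv_sechProfile_sq hK ha,
    show 1 / (p - 1) * (p + 1) = 2 / (p - 1) + 1 by field_simp; ring,
    show 2 * (1 / (p - 1)) = 2 / (p - 1) by ring, add_sub_cancel_right, rpow_add_one hK.ne']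
  have hA := integral_sq_mul_one_sub_sq_rpow hβ hb (tanh_lt_one _).le
  rw [balance]
  generalize ∫ s in tanh (-b)..1, s ^ 2 * (1 - s ^ 2) ^ (2 / (p - 1) - 1) = A at hA ⊢
  generalize ∫ s in tanh (-b)..1, (1 - s ^ 2) ^ (2 / (p - 1)) = B at hA ⊢
  generalize ((p + 1) * ω / 2) ^ (2 / (p - 1)) = Kβ
  field_simp at hA ⊢
  rw [sq_sqrt hω.le]
  linear_combination (-8 * Kβ * ω) * hA

lemma div_le_iff_sq_div_le {x c ξ ω : ℝ} (hx : 0 ≤ x) (hc : 0 < c) (hξ : 0 < ξ) (hω : 0 < ω) :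
    x / (c * √ω) ≤ ξ ↔ x ^ 2 / (c ^ 2 * ξ ^ 2) ≤ ω := by
  rw [div_le_iff₀ (by positivity), div_le_iff₀ (by positivity),
    ← pow_le_pow_iff_left₀ hx (by positivity) two_ne_zero, mul_pow, mul_pow, sq_sqrt hω.le]
  ring_nf

theorem second_derivative_condition_iff_general (p : ℝ) (hp : 5 < p) (N : ℕ) (hN : 2 ≤ N)
    (α ω : ℝ) (hα : α < 0) (hω : α ^ 2 / (N : ℝ) ^ 2 < ω)
    (φ : ℝ → ℝ)
    (hφ : φ = fun x : ℝ => ((p + 1) * ω / 2 *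
      (1 / Real.cosh ((p - 1) * Real.sqrt ω / 2 * x
        - arctanh (α / ((N : ℝ) * Real.sqrt ω)))) ^ 2) ^ (1 / (p - 1)))
    (ξ₁ : ℝ) (hξ₁ : ξ₁ ∈ Set.Ioo (0 : ℝ) 1)
    (huniq : ∀ ξ ∈ Set.Ioo (0 : ℝ) 1,
      (p - 5) / 2 * (∫ s in ξ..1, (1 - s ^ 2) ^ (2 / (p - 1)))
        = ξ * (1 - ξ ^ 2) ^ (2 / (p - 1)) → ξ = ξ₁) :
    ((∫ x in Set.Ioi (0 : ℝ), (deriv φ x) ^ 2)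
        ≤ (p - 1) * (p - 3) / (4 * (p + 1)) * ∫ x in Set.Ioi (0 : ℝ), φ x ^ (p + 1))
      ↔ α ^ 2 / ((N : ℝ) ^ 2 * ξ₁ ^ 2) ≤ ω := by
  have hN0 : (0 : ℝ) < N := Nat.cast_pos.2 (by omega)
  have hω0 : 0 < ω := (by positivity : 0 ≤ α ^ 2 / (N : ℝ) ^ 2).trans_lt hω
  have hc : 0 < (N : ℝ) * √ω := by positivity
  have hξ₀ : -α / (N * √ω) ∈ Ioo 0 1 := by
    refine ⟨div_pos (by linarith) hc, (div_lt_one hc).2 ?_⟩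
    rw [← pow_lt_pow_iff_left₀ (by linarith) hc.le two_ne_zero, mul_pow, sq_sqrt hω0.le, neg_sq]
    rwa [div_lt_iff₀ (by positivity), mul_comm] at hω
  have hmem : α / (N * √ω) ∈ Ioo (-1) 1 := by
    rw [neg_div] at hξ₀
    exact ⟨by linarith [hξ₀.2], by linarith [hξ₀.1]⟩
  have htanh : tanh (-arctanh (α / (N * √ω))) = -α / (N * √ω) := by
    rw [arctanh_eq_artanh (Ioo_subset_Icc_self hmem), tanh_neg, tanh_artanh hmem, neg_div]
  have hφ' : φ = sechProfile ((p + 1) * ω / 2) ((p - 1) * √ω / 2)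
      (arctanh (α / (N * √ω))) (1 / (p - 1)) := hφ
  rw [hφ', ← sub_nonneg, integral_gap_sechProfile_eq_balance (by linarith) hω0 (htanh ▸ hξ₀.1.le), htanh,
    mul_nonneg_iff_of_pos_left (by positivity), balance_nonneg_iff hp huniq hξ₀,
    div_le_iff_sq_div_le (by linarith) hN0 hξ₁.1 hω0, neg_sq]

/-- For the ground-state profile `φ` of the NLS-δ equation on a star graph with `N` edges
(with `α < 0`, `p > 5`), the second-derivative condition
`∫₀^∞ φ'² ≤ ((p−1)(p−3)/(4(p+1)))·∫₀^∞ φ^{p+1}` holds iff `ω ≥ α²/(N²ξ₁²)`,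
where `ξ₁` is the unique solution in `(0,1)` of
`((p−5)/2)·∫_ξ^1 (1−s²)^{2/(p−1)} ds = ξ·(1−ξ²)^{2/(p−1)}`. -/
theorem second_derivative_condition_iff (p : ℝ) (hp : 5 < p) (N : ℕ) (hN : 2 ≤ N)
    (α ω : ℝ) (hα : α < 0) (hω : α ^ 2 / (N : ℝ) ^ 2 < ω)
    (φ : ℝ → ℝ)
    (hφ : φ = fun x : ℝ => ((p + 1) * ω / 2 *
      (1 / Real.cosh ((p - 1) * Real.sqrt ω / 2 * x
        - arctanh (α / ((N : ℝ) * Real.sqrt ω)))) ^ 2) ^ (1 / (p - 1)))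
    (ξ₁ : ℝ) (hξ₁ : ξ₁ ∈ Set.Ioo (0 : ℝ) 1)
    (hξeq : (p - 5) / 2 * (∫ s in ξ₁..1, (1 - s ^ 2) ^ (2 / (p - 1)))
      = ξ₁ * (1 - ξ₁ ^ 2) ^ (2 / (p - 1)))
    (huniq : ∀ ξ ∈ Set.Ioo (0 : ℝ) 1,
      (p - 5) / 2 * (∫ s in ξ..1, (1 - s ^ 2) ^ (2 / (p - 1)))
        = ξ * (1 - ξ ^ 2) ^ (2 / (p - 1)) → ξ = ξ₁) :
    ((∫ x in Set.Ioi (0 : ℝ), (deriv φ x) ^ 2)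
        ≤ (p - 1) * (p - 3) / (4 * (p + 1)) * ∫ x in Set.Ioi (0 : ℝ), φ x ^ (p + 1))
      ↔ α ^ 2 / ((N : ℝ) ^ 2 * ξ₁ ^ 2) ≤ ω :=
  second_derivative_condition_iff_general p hp N hN α ω hα hω φ hφ ξ₁ hξ₁ huniq
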